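/- arXiv:1602.07402 — 5 statements merged into one kernel-verified Lean document; each statement's English description precedes it below -/
import Mathlib

section
/- Let R be a commutative ring and q ∈ R an invertible element such that q^n − 1 is not a zero divisor in R for every integer n > 0. Then the center of the quantum torus over R with parameter q (generated by X^{±1}, Y^{±1} with YX = qXY) equals R·1. -/
/-!
The basis vectors `B g` span a twisted group algebra: `B g * B h = σ g h • B (g + h)`.
Comparing the `g + h` coordinates of `z * B h` and `B h * z` for a central `z` gives
`σ g h * z_g = σ h g * z_g`. For the quantum torus `σ g h / σ h g` is a power `q^k`, and
for `g ≠ 0` one of `h = (1, 0), (0, 1)` makes `k ≠ 0`, so `z_g = 0` because `q^k - 1` is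
not a zero divisor.
Hence `z` is a multiple of `B 0 = 1`.
-/

namespace Module.Basis

variable {G R S : Type*} [CommRing R] [Ring S] [Algebra R S]

theorem eq_smul_of_repr_eq_zero {ι : Type*} (B : Basis ι R S) {z : S} {j : ι}
    (h : ∀ i, i ≠ j → B.repr z i = 0) : z = B.repr z j • B j := by
  rw [B.ext_elem_iff]
  intro i
  by_cases hij : i = j
  · simp [hij]
  · simp [h i hij, hij]

theorem eq_one_of_forall_mul_basis {ι : Type*} (B : Basis ι R S) {e : S}
    (h : ∀ i, e * B i = B i) : e = 1 := by
  have hmulLeft : LinearMap.mulLeft R e = LinearMap.id := B.ext fun i => h i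
  simpa using LinearMap.congr_fun hmulLeft 1

section TwistedMul

variable [AddCancelMonoid G] (B : Basis G R S) {σ : G → G → R}

theorem repr_mul_basis_add (hmul : ∀ g h, B g * B h = σ g h • B (g + h))
    (s : S) (g h : G) :
    B.repr (s * B h) (g + h) = σ g h * B.repr s g := by
  have hcoord : (B.coord (g + h)).comp (LinearMap.mulRight R (B h)) = σ g h • B.coord g := by
    refine B.ext fun a => ?_
    by_cases hag : a = g <;> simp [hmul, hag]
  exact LinearMap.congr_fun hcoord s

theorem repr_basis_mul_add (hmul : ∀ g h, B g * B h = σ g h • B (g + h))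
    (s : S) (g h : G) :
    B.repr (B h * s) (h + g) = σ h g * B.repr s g := by
  have hcoord : (B.coord (h + g)).comp (LinearMap.mulLeft R (B h)) = σ h g • B.coord g := by
    refine B.ext fun a => ?_
    by_cases hag : a = g <;> simp [hmul, hag]
  exact LinearMap.congr_fun hcoord s

end TwistedMul

theorem mul_repr_eq_of_mem_center [AddCancelCommMonoid G] (B : Basis G R S) {σ : G → G → R}
    (hmul : ∀ g h, B g * B h = σ g h • B (g + h)) {z : S} (hz : z ∈ Subalgebra.center R S)
    (g h : G) : σ g h * B.repr z g = σ h g * B.repr z g := by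
  rw [← B.repr_mul_basis_add hmul, ← B.repr_basis_mul_add hmul, add_comm,
    (Subalgebra.mem_center_iff.mp hz (B h))]

end Module.Basis

theorem eq_zero_of_zpow_mul_eq_self {R : Type*} [CommRing R] (q : Rˣ)
    (hq : ∀ n : ℕ, 0 < n → ∀ r : R, r * ((q : R) ^ n - 1) = 0 → r = 0)
    {k : ℤ} (hk : k ≠ 0) {c : R} (hc : ((q ^ k : Rˣ) : R) * c = c) : c = 0 := by
  have hnat : (q : R) ^ k.natAbs * c = c := by
    rcases Int.natAbs_eq k with hk' | hk'
    · rw [hk', zpow_natCast, Units.val_pow_eq_pow_val] at hc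
      exact hc
    · rw [hk', zpow_neg, zpow_natCast, Units.inv_mul_eq_iff_eq_mul,
        Units.val_pow_eq_pow_val] at hc
      exact hc.symm
  exact hq k.natAbs (Int.natAbs_pos.mpr hk) c (by rw [mul_sub, mul_one, mul_comm, hnat, sub_self])

/-- If `q ∈ R` is a unit such that `q^n - 1` is not a zero divisor for every `n > 0`,
then the center of the quantum torus over `R` with parameter `q` is `R·1`.
The quantum torus is encoded as any `R`-algebra `S` with an `R`-basis
`{X^m Y^n : (m,n) ∈ ℤ × ℤ}` whose multiplication satisfies
`(X^{m₁}Y^{n₁})(X^{m₂}Y^{n₂}) = q^{n₁ m₂} X^{m₁+m₂} Y^{n₁+n₂}`. -/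
theorem quantum_torus_center_trivial
    {R : Type*} [CommRing R] (q : Rˣ)
    (hq : ∀ n : ℕ, 0 < n → ∀ r : R, r * ((q : R) ^ n - 1) = 0 → r = 0)
    {S : Type*} [Ring S] [Algebra R S] (B : Module.Basis (ℤ × ℤ) R S)
    (hmul : ∀ m₁ n₁ m₂ n₂ : ℤ,
      B (m₁, n₁) * B (m₂, n₂) =
        (((q ^ (n₁ * m₂) : Rˣ) : R)) • B (m₁ + m₂, n₁ + n₂)) :
    Subalgebra.center R S = ⊥ := by
  have htwisted : ∀ g h : ℤ × ℤ, B g * B h = ((q ^ (g.2 * h.1) : Rˣ) : R) • B (g + h) :=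
    fun g h => hmul g.1 g.2 h.1 h.2
  have hone : B (0, 0) = 1 := B.eq_one_of_forall_mul_basis fun g => by simpa using hmul 0 0 g.1 g.2
  refine le_antisymm (fun z hz => ?_) bot_le
  have hcoord : ∀ g, g ≠ (0, 0) → B.repr z g = 0 := by
    rintro ⟨m, n⟩ hg
    have hcomm := B.mul_repr_eq_of_mem_center htwisted hz (m, n)
    rcases eq_or_ne n 0 with rfl | hn
    · exact eq_zero_of_zpow_mul_eq_self q hq (by simpa using hg)
        (by simpa using (hcomm (0, 1)).symm)
    · exact eq_zero_of_zpow_mul_eq_self q hq hn (by simpa using hcomm (1, 0))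
  rw [Algebra.mem_bot]
  exact ⟨B.repr z (0, 0), by
    rw [Algebra.algebraMap_eq_smul_one, ← hone, ← B.eq_smul_of_repr_eq_zero hcoord]⟩
end

section
/- Let M be a cancellative commutative monoid equipped with a linear order compatible with addition (a < b implies a + c < b + c), let R be an integral domain, and let σ : M × M → Rˣ be any function. Then the twisted monoid algebra, i.e., the free R-module with basis {e_m : m ∈ M} and multiplication e_a · e_b = σ(a,b) · e_{a+b} (assumed associative), has no nonzero zero divisors. -/
/-!
For a linear order compatible with addition, the largest exponents `a₀`, `b₀` in the supports
of `x` and `y` give the only way of writing `a₀ + b₀` as a sum of exponents from the two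
supports (Mathlib's `UniqueSums`). Hence the coefficient of `e_{a₀+b₀}` in `x * y` is the
single product `x_{a₀} y_{b₀} σ(a₀, b₀)`, which is nonzero because `R` is a domain and
`σ(a₀, b₀)` is a unit.
-/

namespace Module.Basis

variable {R M S : Type*} [CommSemiring R] [Add M] [Semiring S] [Algebra R S]
  (B : Basis M R S) {σ : M × M → R} (hmul : ∀ a b, B a * B b = σ (a, b) • B (a + b))
include hmul

theorem repr_mul_apply_of_mul_eq_smul [DecidableEq M] (x y : S) (m : M) :
    B.repr (x * y) m = (B.repr x).sum fun a r => (B.repr y).sum fun b s =>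
      if a + b = m then r * s * σ (a, b) else 0 := by
  rw [← LinearMap.mul_apply' (R := R), ← LinearMap.sum_repr_mul_repr_mul B B x y]
  simp only [LinearMap.mul_apply', hmul, smul_smul, Finsupp.sum, map_sum, map_smul,
    Finsupp.coe_finsetSum, Finset.sum_apply, Finsupp.smul_apply, repr_self,
    Finsupp.single_apply, smul_eq_mul, mul_ite, mul_one, mul_zero, mul_assoc]

theorem repr_mul_add_of_uniqueAdd {x y : S} {a₀ b₀ : M}
    (h : UniqueAdd (B.repr x).support (B.repr y).support a₀ b₀) :
    B.repr (x * y) (a₀ + b₀) = B.repr x a₀ * B.repr y b₀ * σ (a₀, b₀) := by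
  classical
  rw [B.repr_mul_apply_of_mul_eq_smul hmul]
  simp_rw [Finsupp.sum, ← Finset.sum_product']
  refine (Finset.sum_eq_single (a₀, b₀) ?_ ?_).trans (if_pos rfl)
  · rintro ⟨a, b⟩ hab hne
    rw [Finset.mem_product] at hab
    exact if_neg fun he ↦ hne (Prod.ext (h hab.1 hab.2 he).1 (h hab.1 hab.2 he).2)
  · intro hnotMem
    rw [Finset.mem_product, not_and_or, Finsupp.notMem_support_iff,
      Finsupp.notMem_support_iff] at hnotMem
    rcases hnotMem with h0 | h0 <;> simp [h0]

theorem noZeroDivisors_of_mul_eq_smul [NoZeroDivisors R] [UniqueSums M]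
    (hσ : ∀ p, σ p ≠ 0) : NoZeroDivisors S where
  eq_zero_or_eq_zero_of_mul_eq_zero {x y} hxy := by
    by_contra! hne
    obtain ⟨a₀, ha₀, b₀, hb₀, huniq⟩ := UniqueSums.uniqueAdd_of_nonempty
      (Finsupp.support_nonempty_iff.mpr (B.repr.map_ne_zero_iff.mpr hne.1))
      (Finsupp.support_nonempty_iff.mpr (B.repr.map_ne_zero_iff.mpr hne.2))
    have hlead := B.repr_mul_add_of_uniqueAdd hmul huniq
    rw [hxy, map_zero, Finsupp.zero_apply] at hlead
    exact mul_ne_zero (mul_ne_zero (Finsupp.mem_support_iff.mp ha₀)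
      (Finsupp.mem_support_iff.mp hb₀)) (hσ _) hlead.symm

end Module.Basis

/-- A twisted monoid algebra of a linearly ordered cancellative commutative monoid
over an integral domain has no nonzero zero divisors.  The algebra is encoded as any
`R`-algebra `S` (associativity is part of the ring structure) with an `R`-basis
`{e_m : m ∈ M}` satisfying `e_a · e_b = σ(a,b) e_{a+b}` for a function
`σ : M × M → Rˣ`. -/
theorem twisted_monoid_algebra_no_zero_divisors
    {R : Type*} [CommRing R] [IsDomain R]
    {M : Type*} [AddCancelCommMonoid M] [LinearOrder M]
    [CovariantClass M M (· + ·) (· < ·)]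
    {S : Type*} [Ring S] [Algebra R S] (B : Module.Basis M R S)
    (σ : M × M → Rˣ)
    (hmul : ∀ a b : M, B a * B b = ((σ (a, b) : R)) • B (a + b)) :
    ∀ x y : S, x ≠ 0 → y ≠ 0 → x * y ≠ 0 := by
  have := B.noZeroDivisors_of_mul_eq_smul hmul fun p ↦ (σ p).ne_zero
  exact fun x y ↦ mul_ne_zero
end

section
/- Let R be a commutative ring, A ∈ R a unit, and consider the free R-module T with basis {(n,t) : n ∈ ℤ_{>0}, t ∈ ℤ} ∪ {(0,t) : t ∈ ℤ_{≥0}}, with multiplication defined on basis elements with n_1, n_2 > 0 by (n_1,t_1)·(n_2,t_2) = A^{t_2 n_1 − t_1 n_2} (n_1+n_2, t_1+t_2), by (n,t)·(0,t') = Σ_{j=0}^{t'} C(t',j) A^{(t'−2j)n} (n, t+t'−2j), by (0,t')·(n,t) = Σ_{j=0}^{t'} C(t',j) A^{−(t'−2j)n} (n, t+t'−2j), and by (0,t)·(0,t') = (0,t+t'). Then this multiplication is associative. -/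
/-- Basis index set for the reduced skein algebra of the marked annulus:
pairs `(n,t)` with `n > 0, t ∈ ℤ`, together with `(0,t)` for `t ≥ 0`. -/
abbrev AnnulusIdx : Type := {p : ℕ × ℤ // 0 < p.1 ∨ 0 ≤ p.2}

/-- Structure constants of the reduced skein algebra of the marked annulus on the
basis `T(n,t)`:
`(n₁,t₁)·(n₂,t₂) = A^{t₂n₁ - t₁n₂}(n₁+n₂, t₁+t₂)` for `n₁,n₂ > 0`;
`(n,t)·(0,t') = Σⱼ C(t',j) A^{(t'-2j)n} (n, t+t'-2j)`;
`(0,t')·(n,t) = Σⱼ C(t',j) A^{-(t'-2j)n} (n, t+t'-2j)`;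
`(0,t)·(0,t') = (0, t+t')`. -/
noncomputable def annulusMulBasis {R : Type*} [CommRing R] (A : Rˣ)
    (a b : AnnulusIdx) : AnnulusIdx →₀ R :=
  if h1 : a.1.1 = 0 then
    if h2 : b.1.1 = 0 then
      Finsupp.single ⟨(0, a.1.2 + b.1.2),
        Or.inr (by have ha := a.2; have hb := b.2; omega)⟩ 1
    else
      ∑ j ∈ Finset.range (a.1.2.toNat + 1),
        Finsupp.single ⟨(b.1.1, b.1.2 + a.1.2 - 2 * j), Or.inl (by omega)⟩
          ((a.1.2.toNat.choose j : R) *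
            ((A ^ (-((a.1.2 - 2 * (j : ℤ)) * (b.1.1 : ℤ))) : Rˣ) : R))
  else
    if h2 : b.1.1 = 0 then
      ∑ j ∈ Finset.range (b.1.2.toNat + 1),
        Finsupp.single ⟨(a.1.1, a.1.2 + b.1.2 - 2 * j), Or.inl (by omega)⟩
          ((b.1.2.toNat.choose j : R) *
            ((A ^ ((b.1.2 - 2 * (j : ℤ)) * (a.1.1 : ℤ)) : Rˣ) : R))
    else
      Finsupp.single ⟨(a.1.1 + b.1.1, a.1.2 + b.1.2), Or.inl (by omega)⟩
        ((A ^ (b.1.2 * (a.1.1 : ℤ) - a.1.2 * (b.1.1 : ℤ)) : Rˣ) : R)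

/-- Multiplication on the reduced skein algebra of the marked annulus, the free
`R`-module on `AnnulusIdx`, extending the structure constants bilinearly. -/
noncomputable def annulusMul {R : Type*} [CommRing R] (A : Rˣ)
    (f g : AnnulusIdx →₀ R) : AnnulusIdx →₀ R :=
  f.sum fun a ra => g.sum fun b rb => (ra * rb) • annulusMulBasis A a b

/-!
Associativity is checked on triples of basis elements. When all three are arcs (`n > 0`) it is the
cocycle identity of the quantum torus `(n₁,t₁)(n₂,t₂) = A^{t₂n₁-t₁n₂}(n₁+n₂,t₁+t₂)`; when loops
`(0,t)` are involved the binomial sums only need reindexing, except when the two loops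
`(0,r)(0,s) = (0,r+s)` act on an arc, which is Vandermonde's identity. Reversing the order of
multiplication amounts to replacing `A` by `A⁻¹`, so it suffices to treat the triples in which a
loop in the last position forces a loop in the first.
-/

open Finset
open Finsupp (single)

theorem sum_range_choose_mul_choose_smul {M : Type*} [AddCommMonoid M] (m n : ℕ) (f : ℕ → M) :
    ∑ i ∈ range (m + 1), ∑ j ∈ range (n + 1), (m.choose i * n.choose j) • f (i + j) =
      ∑ k ∈ range (m + n + 1), (m + n).choose k • f k := by
  rw [← sum_product', ← sum_fiberwise_of_maps_to (g := fun p : ℕ × ℕ => p.1 + p.2)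
    (t := range (m + n + 1)) (fun p hp => by simp only [mem_product, mem_range] at hp ⊢; omega)]
  refine sum_congr rfl fun k _ => ?_
  rw [sum_congr rfl fun p hp => by rw [(mem_filter.1 hp).2], ← sum_smul, Nat.add_choose_eq]
  congr 1
  refine sum_subset (fun p hp => ?_) fun p hp hpk => ?_
  · simp only [mem_filter, mem_product, mem_range, HasAntidiagonal.mem_antidiagonal] at hp ⊢
    omega
  · simp only [mem_filter, mem_product, mem_range, HasAntidiagonal.mem_antidiagonal] at hp hpk
    obtain h | h : m < p.1 ∨ n < p.2 := by omega
    · rw [Nat.choose_eq_zero_of_lt h, zero_mul]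
    · rw [Nat.choose_eq_zero_of_lt h, mul_zero]

theorem Finsupp.assoc_of_single {α R : Type*} [CommSemiring R]
    (μ : (α →₀ R) →ₗ[R] (α →₀ R) →ₗ[R] (α →₀ R))
    (h : ∀ a b c, μ (μ (single a 1) (single b 1)) (single c 1) =
      μ (single a 1) (μ (single b 1) (single c 1)))
    (f g k : α →₀ R) : μ (μ f g) k = μ f (μ g k) := by
  suffices e : μ.compr₂ μ = (LinearMap.llcomp R _ _ _ ∘ₗ μ).compl₂ μ from
    DFunLike.congr_fun (LinearMap.congr_fun₂ e f g) k
  ext a b c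
  simpa using congr($(h a b c) _)

theorem Units.val_zpow_mul_val_zpow_eq {M : Type*} [Monoid M] (A : Mˣ) {x y z w : ℤ}
    (h : x + y = z + w) :
    ((A ^ x : Mˣ) : M) * ((A ^ y : Mˣ) : M) = ((A ^ z : Mˣ) : M) * ((A ^ w : Mˣ) : M) := by
  simp only [← Units.val_mul, ← zpow_add, h]

theorem single_mk_congr {R : Type*} [Zero R] {n n' : ℕ} {t t' : ℤ} {h : 0 < n ∨ 0 ≤ t}
    {h' : 0 < n' ∨ 0 ≤ t'} {r r' : R} (hn : n = n') (ht : t = t') (hr : r = r') :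
    single (⟨(n, t), h⟩ : AnnulusIdx) r = single ⟨(n', t'), h'⟩ r' := by
  subst hn ht hr; rfl

section
variable {R : Type*} [CommRing R] (A : Rˣ)

noncomputable def annulusMulₗ :
    (AnnulusIdx →₀ R) →ₗ[R] (AnnulusIdx →₀ R) →ₗ[R] (AnnulusIdx →₀ R) :=
  Finsupp.lsum R fun a => LinearMap.toSpanSingleton R _
    (Finsupp.lsum R fun b => LinearMap.toSpanSingleton R _ (annulusMulBasis A a b))

theorem annulusMulₗ_single_single (a b : AnnulusIdx) (r s : R) :
    annulusMulₗ A (single a r) (single b s) = (r * s) • annulusMulBasis A a b := by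
  simp [annulusMulₗ, smul_smul]

theorem annulusMul_eq_annulusMulₗ (f g : AnnulusIdx →₀ R) :
    annulusMul A f g = annulusMulₗ A f g := by
  simp only [annulusMul, annulusMulₗ, Finsupp.lsum_apply, LinearMap.finsupp_sum_apply,
    LinearMap.toSpanSingleton_apply, LinearMap.smul_apply, Finsupp.smul_sum, smul_smul]

theorem annulusMulBasis_inv (a b : AnnulusIdx) :
    annulusMulBasis A⁻¹ a b = annulusMulBasis A b a := by
  obtain ⟨⟨_ | m, s⟩, ha⟩ := a <;> obtain ⟨⟨_ | n, t⟩, hb⟩ := b <;>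
    simp only [annulusMulBasis, reduceDIte, inv_zpow', neg_neg, neg_sub, Nat.add_one_ne_zero]
  all_goals congr 2; ext <;> simp [add_comm]

theorem annulusMulₗ_inv_eq_flip : annulusMulₗ A⁻¹ = (annulusMulₗ A).flip := by
  ext a b
  simp [annulusMulₗ_single_single, annulusMulBasis_inv]

theorem annulusMulₗ_assoc_of_fst_eq_zero {a b : AnnulusIdx} (ha : a.1.1 = 0) (hb : b.1.1 = 0)
    (c : AnnulusIdx) :
    annulusMulₗ A (annulusMulBasis A a b) (single c 1) =
      annulusMulₗ A (single a 1) (annulusMulBasis A b c) := by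
  obtain ⟨⟨_, r⟩, hr⟩ := a
  obtain ⟨⟨_, s⟩, hs⟩ := b
  subst ha hb
  lift r to ℕ using hr.resolve_left (lt_irrefl 0)
  lift s to ℕ using hs.resolve_left (lt_irrefl 0)
  obtain ⟨⟨_ | n, t⟩, hc⟩ := c <;>
    simp only [annulusMulBasis, reduceDIte, Nat.add_one_ne_zero, annulusMulₗ_single_single,
      map_sum, Finsupp.smul_single', one_mul, mul_one, Finset.smul_sum, one_smul,
      Int.toNat_natCast]
  · exact single_mk_congr rfl (add_assoc _ _ _) rfl
  let f : ℕ → AnnulusIdx →₀ R := fun k => single ⟨(n + 1, t + r + s - 2 * k), Or.inl n.succ_pos⟩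
    ((A ^ (-((r + s - 2 * (k : ℤ)) * (n + 1 : ℕ))) : Rˣ) : R)
  calc _ = ∑ k ∈ range (s + r + 1), (s + r).choose k • f k := by
        simp only [← Nat.cast_add, Int.toNat_natCast, add_comm r]
        refine sum_congr rfl fun k _ => ?_
        rw [Finsupp.smul_single, nsmul_eq_mul]
        exact single_mk_congr rfl (by push_cast; ring) (by push_cast; ring_nf)
    _ = ∑ i ∈ range (s + 1), ∑ j ∈ range (r + 1), (s.choose i * r.choose j) • f (i + j) :=
        (sum_range_choose_mul_choose_smul s r f).symm
    _ = _ := by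
        refine sum_congr rfl fun i _ => sum_congr rfl fun j _ => ?_
        rw [Finsupp.smul_single, nsmul_eq_mul, mul_mul_mul_comm, ← Units.val_mul, ← zpow_add]
        exact single_mk_congr rfl (by push_cast; ring) (by push_cast; ring_nf)

theorem annulusMulₗ_basis_assoc (a b c : AnnulusIdx) :
    annulusMulₗ A (annulusMulBasis A a b) (single c 1) =
      annulusMulₗ A (single a 1) (annulusMulBasis A b c) := by
  wlog hac : c.1.1 = 0 → a.1.1 = 0 generalizing A a b c
  · simpa only [annulusMulₗ_inv_eq_flip, LinearMap.flip_apply, annulusMulBasis_inv] using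
      (this A⁻¹ c b a fun _ => by tauto).symm
  obtain ⟨⟨_ | l, r⟩, ha⟩ := a <;> obtain ⟨⟨_ | m, s⟩, hb⟩ := b
  · exact annulusMulₗ_assoc_of_fst_eq_zero A rfl rfl _
  all_goals
    obtain ⟨⟨_ | n, t⟩, hc⟩ := c <;>
      simp only [Nat.add_one_ne_zero, imp_false, not_true, forall_const] at hac <;>
      simp only [annulusMulBasis, reduceDIte, Nat.add_one_ne_zero, Nat.add_eq_zero_iff, and_false,
        annulusMulₗ_single_single, map_sum, LinearMap.coe_sum, Finset.sum_apply,
        Finsupp.smul_single', one_mul, mul_one, Finset.smul_sum]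
  case zero.succ.zero =>
    rw [sum_comm]
    exact sum_congr rfl fun j _ => sum_congr rfl fun k _ => single_mk_congr rfl (by ring) (by ring)
  case zero.succ.succ =>
    refine sum_congr rfl fun j _ => single_mk_congr rfl (by ring) ?_
    rw [mul_assoc, mul_left_comm _ (Nat.cast _ : R)]
    exact congr_arg _ (Units.val_zpow_mul_val_zpow_eq A (by push_cast; ring))
  case succ.zero.succ =>
    refine sum_congr rfl fun j _ => single_mk_congr rfl (by ring) ?_
    rw [mul_assoc, mul_assoc]
    exact congr_arg _ (Units.val_zpow_mul_val_zpow_eq A (by push_cast; ring))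
  case succ.succ.succ =>
    exact single_mk_congr (by ring) (by ring)
      (Units.val_zpow_mul_val_zpow_eq A (by push_cast; ring))

end

/-- The multiplication of the reduced skein algebra of the marked annulus is
associative. -/
theorem annulusMul_assoc {R : Type*} [CommRing R] (A : Rˣ)
    (f g h : AnnulusIdx →₀ R) :
    annulusMul A (annulusMul A f g) h = annulusMul A f (annulusMul A g h) := by
  simp only [annulusMul_eq_annulusMulₗ]
  refine Finsupp.assoc_of_single _ (fun a b c => ?_) f g h
  simpa only [annulusMulₗ_single_single, one_mul, one_smul] using annulusMulₗ_basis_assoc A a b c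
end

section
/- Let R be a commutative ring, A ∈ R a unit, and let T be the algebra of the previous context (reduced skein algebra of the marked annulus with basis T(n,t)). If R is an integral domain, then T has no nonzero zero divisors. -/
/-!
Order the basis lexicographically by `(n, t)`. A product `T(n₁,t₁) T(n₂,t₂)` only involves
basis elements `T(n₁+n₂, t)` with `t ≤ t₁+t₂`, and the coefficient of `T(n₁+n₂, t₁+t₂)` is a
power of `A` (the `j = 0` term in the mixed cases). Since lexicographic order on `ℕ × ℤ` is
compatible with addition, the coefficient of `T(a₀ + b₀)` in `f g`, for `a₀`, `b₀` the largest
indices in the supports of `f` and `g`, is `f(a₀) g(b₀)` times a unit, which is nonzero over a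
domain.
-/

instance : Add AnnulusIdx where
  add a b := ⟨a.1 + b.1, by have := a.2; have := b.2; simp only [Prod.fst_add, Prod.snd_add]; omega⟩

@[simp]
theorem AnnulusIdx.val_add (a b : AnnulusIdx) : (a + b).1 = a.1 + b.1 := rfl

theorem add_lt_add_of_le_of_le_of_ne {M : Type*} [AddCommMonoid M] [PartialOrder M]
    [IsOrderedCancelAddMonoid M] {a b c d : M} (hab : a ≤ b) (hcd : c ≤ d)
    (hne : a ≠ b ∨ c ≠ d) : a + c < b + d := by
  rcases hne with h | h
  · exact add_lt_add_of_lt_of_le (hab.lt_of_ne h) hcd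
  · exact add_lt_add_of_le_of_lt hab (hcd.lt_of_ne h)

section
variable {R : Type*} [CommRing R] (A : Rˣ)

theorem toLex_le_of_annulusMulBasis_apply_ne_zero {a b c : AnnulusIdx}
    (h : annulusMulBasis A a b c ≠ 0) : toLex c.1 ≤ toLex a.1 + toLex b.1 := by
  obtain ⟨⟨n, t⟩, hc⟩ := c
  rw [← toLex_add, Prod.Lex.toLex_le_toLex]
  unfold annulusMulBasis at h
  split_ifs at h
  all_goals
    first
      | have hidx := (Finsupp.single_apply_ne_zero.mp h).1
      | rw [Finset.sum_apply'] at h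
        obtain ⟨j, -, h⟩ := Finset.exists_ne_zero_of_sum_ne_zero h
        have hidx := (Finsupp.single_apply_ne_zero.mp h).1
    simp only [Subtype.mk.injEq, Prod.mk.injEq] at hidx
    simp only [Prod.fst_add, Prod.snd_add]
    omega

theorem isUnit_annulusMulBasis_apply_add (a b : AnnulusIdx) :
    IsUnit (annulusMulBasis A a b (a + b)) := by
  unfold annulusMulBasis
  split_ifs with ha hb hb
  · rw [Finsupp.single_apply, if_pos (by ext <;> simp [ha, hb])]
    exact isUnit_one
  on_goal 3 =>
    rw [Finsupp.single_apply, if_pos (by rfl)]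
    exact Units.isUnit _
  all_goals
    rw [Finset.sum_apply', Finset.sum_eq_single_of_mem 0 (by simp)]
    · rw [Finsupp.single_apply, if_pos (by ext <;> simp <;> omega)]
      simp
    · intro j _ hj
      rw [Finsupp.single_apply, if_neg (by simp [Subtype.ext_iff, Prod.ext_iff]; omega)]

theorem annulusMul_apply (f g : AnnulusIdx →₀ R) (c : AnnulusIdx) :
    annulusMul A f g c =
      ∑ p ∈ f.support ×ˢ g.support, f p.1 * g p.2 * annulusMulBasis A p.1 p.2 c := by
  simp only [annulusMul, Finsupp.sum, Finset.sum_apply', Finsupp.smul_apply, smul_eq_mul,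
    Finset.sum_product]

end

/-- If `R` is an integral domain, the reduced skein algebra of the marked annulus
has no nonzero zero divisors. -/
theorem annulusMul_no_zero_divisors {R : Type*} [CommRing R] [IsDomain R] (A : Rˣ)
    (f g : AnnulusIdx →₀ R) (hf : f ≠ 0) (hg : g ≠ 0) :
    annulusMul A f g ≠ 0 := by
  obtain ⟨a₀, ha₀, ha₀_max⟩ :=
    f.support.exists_max_image (toLex ·.1) (Finsupp.support_nonempty_iff.mpr hf)
  obtain ⟨b₀, hb₀, hb₀_max⟩ :=
    g.support.exists_max_image (toLex ·.1) (Finsupp.support_nonempty_iff.mpr hg)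
  have hlead :
      annulusMul A f g (a₀ + b₀) = f a₀ * g b₀ * annulusMulBasis A a₀ b₀ (a₀ + b₀) := by
    rw [annulusMul_apply, Finset.sum_eq_single_of_mem (a₀, b₀) (Finset.mk_mem_product ha₀ hb₀)]
    rintro ⟨a, b⟩ hab hne
    rw [Finset.mem_product] at hab
    by_contra hcoeff
    refine (toLex_le_of_annulusMulBasis_apply_ne_zero A (right_ne_zero_of_mul hcoeff)).not_gt
      (add_lt_add_of_le_of_le_of_ne (ha₀_max a hab.1) (hb₀_max b hab.2) ?_)
    contrapose! hne
    exact Prod.ext (Subtype.ext hne.1) (Subtype.ext hne.2)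
  intro hzero
  rw [hzero, Finsupp.coe_zero, Pi.zero_apply] at hlead
  exact mul_ne_zero (mul_ne_zero (Finsupp.mem_support_iff.mp ha₀) (Finsupp.mem_support_iff.mp hb₀))
    (isUnit_annulusMulBasis_apply_add A a₀ b₀).ne_zero hlead.symm
end

section
/- Let R be an integral domain and let S be an associative R-algebra, free as an R-module with basis ℬ, equipped with a function w : ℬ → ℤ≥0 (weight) and a linear order ≺ on ℬ refining the weight (w(b) < w(b') implies b ≺ b'). Suppose that for all b, b' ∈ ℬ, the product b·b' is an R-linear combination of basis elements of weight at most w(b)+w(b'), and the coefficient in b·b' of some distinguished basis element μ(b,b') of weight exactly w(b)+w(b') is a unit, where μ(b,b') is the ≺-maximum basis element occurring, and μ is injective in each variable and strictly monotone: b_1 ≺ b_2 implies μ(b_1,b') ≺ μ(b_2,b') and μ(b',b_1) ≺ μ(b',b_2). Then S has no nonzero zero divisors. -/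
/-!
Expand `x * y` in the basis and look at the coefficient of `μ b b'`, where `b` and `b'` are the
largest basis elements occurring in `x` and `y`. Every other pair `(i, j)` of basis elements
occurring in `x` and `y` has `μ i j < μ b b'` by strict monotonicity, so `B i * B j` does not
reach `μ b b'`; the coefficient is therefore `x_b * y_{b'}` times a unit, which is nonzero
because `R` is a domain.
-/

namespace Module.Basis

variable {R S ι : Type*} [CommSemiring R] [Semiring S] [Algebra R S] (B : Basis ι R S)

theorem repr_mul_apply (x y : S) (c : ι) :
    B.repr (x * y) c = ∑ i ∈ (B.repr x).support, ∑ j ∈ (B.repr y).support,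
      B.repr x i * B.repr y j * B.repr (B i * B j) c := by
  conv_lhs => rw [← B.linearCombination_repr x, ← B.linearCombination_repr y]
  simp only [Finsupp.linearCombination_apply, Finsupp.sum, Finset.sum_mul_sum, smul_mul_smul_comm,
    map_sum, map_smul, Finsupp.finsetSum_apply, Finsupp.smul_apply, smul_eq_mul]

variable [PartialOrder ι] {B} {μ : ι → ι → ι}

theorem repr_mul_apply_of_forall_le
    (hmax : ∀ i j c, B.repr (B i * B j) c ≠ 0 → c ≤ μ i j)
    (hmono_left : ∀ j, StrictMono (μ · j)) (hmono_right : ∀ i, StrictMono (μ i))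
    {x y : S} {b b' : ι} (hb : ∀ i ∈ (B.repr x).support, i ≤ b)
    (hb' : ∀ j ∈ (B.repr y).support, j ≤ b') :
    B.repr (x * y) (μ b b') = B.repr x b * B.repr y b' * B.repr (B b * B b') (μ b b') := by
  have hvanish : ∀ i j, μ i j < μ b b' → B.repr (B i * B j) (μ b b') = 0 := fun i j hlt =>
    not_not.1 fun hne => (hmax i j _ hne).not_gt hlt
  rw [repr_mul_apply]
  refine (Finset.sum_eq_single b (fun i hi hib => ?_) fun hbx => ?_).trans ?_
  · refine Finset.sum_eq_zero fun j hj => ?_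
    have hlt : μ i j < μ b b' :=
      (hmono_left j ((hb i hi).lt_of_ne hib)).trans_le ((hmono_right b).monotone (hb' j hj))
    rw [hvanish i j hlt, mul_zero]
  · simp [Finsupp.notMem_support_iff.1 hbx]
  refine Finset.sum_eq_single b' (fun j hj hjb => ?_) fun hby => ?_
  · rw [hvanish b j (hmono_right b ((hb' j hj).lt_of_ne hjb)), mul_zero]
  · simp [Finsupp.notMem_support_iff.1 hby]

end Module.Basis

theorem leading_term_no_zero_divisors_general
    {R : Type*} [CommRing R] [IsDomain R]
    {S : Type*} [Ring S] [Algebra R S]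
    {ι : Type*} [LinearOrder ι] (B : Module.Basis ι R S)
    (μ : ι → ι → ι)
    (hmax : ∀ b b' c : ι, B.repr (B b * B b') c ≠ 0 → c ≤ μ b b')
    (hunit : ∀ b b' : ι, IsUnit (B.repr (B b * B b') (μ b b')))
    (hmono_left : ∀ b₁ b₂ b' : ι, b₁ < b₂ → μ b₁ b' < μ b₂ b')
    (hmono_right : ∀ b' b₁ b₂ : ι, b₁ < b₂ → μ b' b₁ < μ b' b₂) :
    ∀ x y : S, x ≠ 0 → y ≠ 0 → x * y ≠ 0 := by
  intro x y hx hy hxy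
  obtain ⟨b, hbx, hb⟩ := (B.repr x).support.exists_max_image id
    (Finsupp.support_nonempty_iff.2 (by simpa using hx))
  obtain ⟨b', hby, hb'⟩ := (B.repr y).support.exists_max_image id
    (Finsupp.support_nonempty_iff.2 (by simpa using hy))
  have hlead := B.repr_mul_apply_of_forall_le hmax (fun b' _ _ h => hmono_left _ _ b' h)
    (fun b' _ _ h => hmono_right b' _ _ h) hb hb'
  rw [hxy, map_zero, Finsupp.zero_apply] at hlead
  exact mul_ne_zero (mul_ne_zero (Finsupp.mem_support_iff.1 hbx) (Finsupp.mem_support_iff.1 hby))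
    (hunit b b').ne_zero hlead.symm

/-- Abstract leading-term argument.  Let `R` be an integral domain and `S` an
associative `R`-algebra, free with basis `ℬ` (indexed by `ι`), with a weight
`w : ι → ℕ` and a linear order on `ι` refining the weight.  Suppose each product
`B b · B b'` is supported in weights `≤ w b + w b'`, has a `≺`-maximum basis element
`μ b b'` of weight exactly `w b + w b'` occurring with unit coefficient, and `μ` is
strictly monotone in each argument (hence injective in each variable).  Then `S`
has no nonzero zero divisors. -/
theorem leading_term_no_zero_divisors
    {R : Type*} [CommRing R] [IsDomain R]
    {S : Type*} [Ring S] [Algebra R S]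
    {ι : Type*} [LinearOrder ι] (B : Module.Basis ι R S) (w : ι → ℕ)
    (hword : ∀ b b' : ι, w b < w b' → b < b')
    (μ : ι → ι → ι)
    (hwμ : ∀ b b' : ι, w (μ b b') = w b + w b')
    (hbound : ∀ b b' c : ι, B.repr (B b * B b') c ≠ 0 → w c ≤ w b + w b')
    (hmax : ∀ b b' c : ι, B.repr (B b * B b') c ≠ 0 → c ≤ μ b b')
    (hunit : ∀ b b' : ι, IsUnit (B.repr (B b * B b') (μ b b')))
    (hmono_left : ∀ b₁ b₂ b' : ι, b₁ < b₂ → μ b₁ b' < μ b₂ b')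
    (hmono_right : ∀ b' b₁ b₂ : ι, b₁ < b₂ → μ b' b₁ < μ b' b₂) :
    ∀ x y : S, x ≠ 0 → y ≠ 0 → x * y ≠ 0 :=
  leading_term_no_zero_divisors_general B μ hmax hunit hmono_left hmono_right
end
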